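/- The stream function ψ(x₁,x₂) = min{W,H} · max{(x₁/W)², (x₂/H)²} on the open rectangle (−W/2,W/2)×(−H/2,H/2) is 1-Lipschitz, and hence the vector field ∇^⊥ψ = (−∂ψ/∂x₂, ∂ψ/∂x₁) is divergence-free (in the distributional sense) and bounded by 1 in L^∞. -/

import Mathlib

open Set MeasureTheory

noncomputable section

/-- The stream function `ψ(x₁,x₂) = min{W,H} · max{(x₁/W)², (x₂/H)²}`. -/
noncomputable def streamFn (W H : ℝ) (p : ℝ × ℝ) : ℝ :=
  min W H * max ((p.1 / W) ^ 2) ((p.2 / H) ^ 2)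

/-- The open rectangle `(−W/2,W/2) × (−H/2,H/2)`. -/
def rectWH (W H : ℝ) : Set (ℝ × ℝ) :=
  Set.Ioo (-W / 2) (W / 2) ×ˢ Set.Ioo (-H / 2) (H / 2)


private lemma lipschitzOnWith_max' {α} [PseudoEMetricSpace α] {f g : α → ℝ} {K : NNReal}
    {s : Set α} (hf : LipschitzOnWith K f s) (hg : LipschitzOnWith K g s) :
    LipschitzOnWith K (fun x => max (f x) (g x)) s := by
  rw [lipschitzOnWith_iff_restrict] at hf hg ⊢
  exact max_self K ▸ hf.max hg

private lemma hasFDerivAt_piece1 (c : ℝ) (W : ℝ) (p : ℝ × ℝ) :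
    HasFDerivAt (fun p : ℝ × ℝ => c * (p.1 / W) ^ 2)
      ((2 * c * p.1 / W ^ 2) • ContinuousLinearMap.fst ℝ ℝ ℝ) p := by
  have h : (fun p : ℝ × ℝ => c * (p.1 / W) ^ 2) = fun p : ℝ × ℝ => c / W ^ 2 * (p.1 * p.1) := by
    funext q; rw [div_pow]; ring
  rw [h]
  have h2 := ((hasFDerivAt_fst (p := p) (𝕜 := ℝ)).mul
    (hasFDerivAt_fst (p := p) (𝕜 := ℝ))).const_mul (c / W ^ 2)
  have he : ((2 * c * p.1 / W ^ 2) • ContinuousLinearMap.fst ℝ ℝ ℝ)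
      = (c / W ^ 2) • (p.1 • ContinuousLinearMap.fst ℝ ℝ ℝ + p.1 • ContinuousLinearMap.fst ℝ ℝ ℝ) := by
    refine ContinuousLinearMap.ext fun v => ?_
    simp only [ContinuousLinearMap.smul_apply, ContinuousLinearMap.add_apply,
      ContinuousLinearMap.coe_fst', smul_eq_mul]
    ring
  rw [he]; exact h2

private lemma hasFDerivAt_piece2 (c : ℝ) (H : ℝ) (p : ℝ × ℝ) :
    HasFDerivAt (fun p : ℝ × ℝ => c * (p.2 / H) ^ 2)
      ((2 * c * p.2 / H ^ 2) • ContinuousLinearMap.snd ℝ ℝ ℝ) p := by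
  have h : (fun p : ℝ × ℝ => c * (p.2 / H) ^ 2) = fun p : ℝ × ℝ => c / H ^ 2 * (p.2 * p.2) := by
    funext q; rw [div_pow]; ring
  rw [h]
  have h2 := ((hasFDerivAt_snd (p := p) (𝕜 := ℝ)).mul
    (hasFDerivAt_snd (p := p) (𝕜 := ℝ))).const_mul (c / H ^ 2)
  have he : ((2 * c * p.2 / H ^ 2) • ContinuousLinearMap.snd ℝ ℝ ℝ)
      = (c / H ^ 2) • (p.2 • ContinuousLinearMap.snd ℝ ℝ ℝ + p.2 • ContinuousLinearMap.snd ℝ ℝ ℝ) := by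
    refine ContinuousLinearMap.ext fun v => ?_
    simp only [ContinuousLinearMap.smul_apply, ContinuousLinearMap.add_apply,
      ContinuousLinearMap.coe_snd', smul_eq_mul]
    ring
  rw [he]; exact h2




lemma fderiv_streamFn_of_lt1 {W H : ℝ} {x : ℝ × ℝ} (hx : (x.2 / H) ^ 2 < (x.1 / W) ^ 2) :
    fderiv ℝ (streamFn W H) x = (2 * min W H * x.1 / W ^ 2) • ContinuousLinearMap.fst ℝ ℝ ℝ := by
  have hev : streamFn W H =ᶠ[nhds x] fun p : ℝ × ℝ => min W H * (p.1 / W) ^ 2 := by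
    have hopen : IsOpen {p : ℝ × ℝ | (p.2 / H) ^ 2 < (p.1 / W) ^ 2} :=
      isOpen_lt (by fun_prop) (by fun_prop)
    filter_upwards [hopen.mem_nhds hx] with p hp
    simp +zetaDelta only [streamFn, max_eq_left hp.le]
  rw [hev.fderiv_eq, (hasFDerivAt_piece1 (min W H) W x).fderiv]

lemma fderiv_streamFn_of_lt2 {W H : ℝ} {x : ℝ × ℝ} (hx : (x.1 / W) ^ 2 < (x.2 / H) ^ 2) :
    fderiv ℝ (streamFn W H) x = (2 * min W H * x.2 / H ^ 2) • ContinuousLinearMap.snd ℝ ℝ ℝ := by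
  have hev : streamFn W H =ᶠ[nhds x] fun p : ℝ × ℝ => min W H * (p.2 / H) ^ 2 := by
    have hopen : IsOpen {p : ℝ × ℝ | (p.1 / W) ^ 2 < (p.2 / H) ^ 2} :=
      isOpen_lt (by fun_prop) (by fun_prop)
    filter_upwards [hopen.mem_nhds hx] with p hp
    simp +zetaDelta only [streamFn, max_eq_right hp.le]
  rw [hev.fderiv_eq, (hasFDerivAt_piece2 (min W H) H x).fderiv]

lemma hasDerivAt_cq (c H t : ℝ) : HasDerivAt (fun u : ℝ => c * (u / H) ^ 2) (2 * c * t / H ^ 2) t := by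
  have h : (fun u : ℝ => c * (u / H) ^ 2) = fun u : ℝ => c / H ^ 2 * (u * u) := by
    funext u; rw [div_pow]; ring
  rw [h]
  have h2 := ((hasDerivAt_id t).mul (hasDerivAt_id t)).const_mul (c / H ^ 2)
  refine HasDerivAt.congr_deriv h2 ?_
  simp only [id]
  ring

lemma continuous_streamFn (W H : ℝ) : Continuous (streamFn W H) := by
  unfold streamFn; fun_prop




/-- The slice `t ↦ ψ(x₁,t)` has right derivative `s'` everywhere. -/
lemma slice2_hasDerivWithinAt {W H : ℝ} (hW : 0 < W) (hH : 0 < H) (x₁ : ℝ) (t : ℝ) :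
    HasDerivWithinAt (fun u : ℝ => streamFn W H (x₁, u))
      (if (x₁ / W) ^ 2 < (t / H) ^ 2 ∨ ((t / H) ^ 2 = (x₁ / W) ^ 2 ∧ 0 < t)
        then 2 * min W H * t / H ^ 2 else 0) (Ioi t) t := by
  set c := min W H
  set k := (x₁ / W) ^ 2 with hk
  rcases lt_trichotomy k ((t / H) ^ 2) with h | h | h
  · rw [if_pos (Or.inl h)]
    have hev : (fun u : ℝ => streamFn W H (x₁, u)) =ᶠ[nhds t] fun u : ℝ => c * (u / H) ^ 2 := by
      have hopen : IsOpen {u : ℝ | k < (u / H) ^ 2} := isOpen_lt continuous_const (by fun_prop)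
      filter_upwards [hopen.mem_nhds h] with u hu
      simp +zetaDelta only [streamFn, max_eq_right (le_of_lt hu)]
    exact ((hasDerivAt_cq c H t).congr_of_eventuallyEq hev).hasDerivWithinAt
  · -- k = (t/H)^2
    rcases lt_trichotomy t 0 with ht | ht | ht
    · have hcond : ¬(k < (t / H) ^ 2 ∨ ((t / H) ^ 2 = k ∧ 0 < t)) := by
        rintro (hlt | ⟨_, hpos⟩)
        · exact absurd (h ▸ hlt) (lt_irrefl _)
        · exact absurd hpos (not_lt.mpr ht.le)
      rw [if_neg hcond]
      refine ((hasDerivWithinAt_const t (Ioi t) (c * k)).congr_of_eventuallyEq ?_ ?_)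
      · filter_upwards [Ioo_mem_nhdsGT_of_mem (⟨le_rfl, by linarith⟩ : t ∈ Ico t (-t))] with u hu
        have hle : (u / H) ^ 2 ≤ k := by
          rw [h, ← neg_sq (t / H)]
          refine sq_le_sq' ?_ ?_
          · rw [neg_neg]
            gcongr
            exact hu.1.le
          · rw [← neg_div]
            gcongr
            exact hu.2.le
        simp +zetaDelta only [streamFn, max_eq_left hle]
      · simp +zetaDelta only [streamFn, max_eq_left h.ge]
    · subst ht
      have hk0 : k = 0 := by simpa using h
      have hcond : ¬(k < (0 / H) ^ 2 ∨ ((0 / H) ^ 2 = k ∧ (0:ℝ) < 0)) := by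
        rintro (hlt | ⟨_, hpos⟩)
        · exact absurd (h ▸ hlt) (lt_irrefl _)
        · exact absurd hpos (lt_irrefl 0)
      rw [if_neg hcond]
      have hev : (fun u : ℝ => streamFn W H (x₁, u)) =ᶠ[nhds 0] fun u : ℝ => c * (u / H) ^ 2 := by
        refine Filter.Eventually.of_forall fun u => ?_
        simp +zetaDelta only [streamFn, max_eq_right (hk0 ▸ (sq_nonneg (u / H)) : k ≤ (u / H) ^ 2)]
      have := ((hasDerivAt_cq c H 0).congr_of_eventuallyEq hev).hasDerivWithinAt (s := Ioi 0)
      simpa using this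
    · rw [if_pos (Or.inr ⟨h.symm, ht⟩)]
      refine ((hasDerivAt_cq c H t).hasDerivWithinAt).congr_of_eventuallyEq ?_ ?_
      · filter_upwards [self_mem_nhdsWithin] with u (hu : t < u)
        have hle : k ≤ (u / H) ^ 2 := by
          rw [h]
          refine sq_le_sq' ?_ ?_
          · have h1 : (0:ℝ) ≤ t / H := by positivity
            have h2 : (0:ℝ) ≤ u / H := by
              have : (0:ℝ) < u := lt_trans ht hu
              positivity
            linarith
          · gcongr
        simp +zetaDelta only [streamFn, max_eq_right hle]
      · simp +zetaDelta only [streamFn, max_eq_right h.le]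
  · have hcond : ¬(k < (t / H) ^ 2 ∨ ((t / H) ^ 2 = k ∧ 0 < t)) := by
      rintro (hlt | ⟨he, _⟩)
      · exact absurd hlt (not_lt.mpr h.le)
      · exact absurd he h.ne
    rw [if_neg hcond]
    have hev : (fun u : ℝ => streamFn W H (x₁, u)) =ᶠ[nhds t] fun _ : ℝ => c * k := by
      have hopen : IsOpen {u : ℝ | (u / H) ^ 2 < k} := isOpen_lt (by fun_prop) continuous_const
      filter_upwards [hopen.mem_nhds h] with u hu
      simp +zetaDelta only [streamFn, max_eq_left (le_of_lt hu)]
    exact ((hasDerivAt_const t (c * k)).congr_of_eventuallyEq hev).hasDerivWithinAt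




lemma slice1_hasDerivWithinAt {W H : ℝ} (hW : 0 < W) (hH : 0 < H) (x₂ : ℝ) (t : ℝ) :
    HasDerivWithinAt (fun u : ℝ => streamFn W H (u, x₂))
      (if (x₂ / H) ^ 2 < (t / W) ^ 2 ∨ ((t / W) ^ 2 = (x₂ / H) ^ 2 ∧ 0 < t)
        then 2 * min W H * t / W ^ 2 else 0) (Ioi t) t := by
  set c := min W H
  set k := (x₂ / H) ^ 2 with hk
  rcases lt_trichotomy k ((t / W) ^ 2) with h | h | h
  · rw [if_pos (Or.inl h)]
    have hev : (fun u : ℝ => streamFn W H (u, x₂)) =ᶠ[nhds t] fun u : ℝ => c * (u / W) ^ 2 := by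
      have hopen : IsOpen {u : ℝ | k < (u / W) ^ 2} := isOpen_lt continuous_const (by fun_prop)
      filter_upwards [hopen.mem_nhds h] with u hu
      simp +zetaDelta only [streamFn, max_eq_left (le_of_lt hu)]
    exact ((hasDerivAt_cq c W t).congr_of_eventuallyEq hev).hasDerivWithinAt
  · -- k = (t/W)^2
    rcases lt_trichotomy t 0 with ht | ht | ht
    · have hcond : ¬(k < (t / W) ^ 2 ∨ ((t / W) ^ 2 = k ∧ 0 < t)) := by
        rintro (hlt | ⟨_, hpos⟩)
        · exact absurd (h ▸ hlt) (lt_irrefl _)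
        · exact absurd hpos (not_lt.mpr ht.le)
      rw [if_neg hcond]
      refine ((hasDerivWithinAt_const t (Ioi t) (c * k)).congr_of_eventuallyEq ?_ ?_)
      · filter_upwards [Ioo_mem_nhdsGT_of_mem (⟨le_rfl, by linarith⟩ : t ∈ Ico t (-t))] with u hu
        have hle : (u / W) ^ 2 ≤ k := by
          rw [h, ← neg_sq (t / W)]
          refine sq_le_sq' ?_ ?_
          · rw [neg_neg]
            gcongr
            exact hu.1.le
          · rw [← neg_div]
            gcongr
            exact hu.2.le
        simp +zetaDelta only [streamFn, max_eq_right hle]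
      · simp +zetaDelta only [streamFn, max_eq_right h.ge]
    · subst ht
      have hk0 : k = 0 := by simpa using h
      have hcond : ¬(k < (0 / W) ^ 2 ∨ ((0 / W) ^ 2 = k ∧ (0:ℝ) < 0)) := by
        rintro (hlt | ⟨_, hpos⟩)
        · exact absurd (h ▸ hlt) (lt_irrefl _)
        · exact absurd hpos (lt_irrefl 0)
      rw [if_neg hcond]
      have hev : (fun u : ℝ => streamFn W H (u, x₂)) =ᶠ[nhds 0] fun u : ℝ => c * (u / W) ^ 2 := by
        refine Filter.Eventually.of_forall fun u => ?_
        simp +zetaDelta only [streamFn, max_eq_left (hk0 ▸ (sq_nonneg (u / W)) : k ≤ (u / W) ^ 2)]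
      have := ((hasDerivAt_cq c W 0).congr_of_eventuallyEq hev).hasDerivWithinAt (s := Ioi 0)
      simpa using this
    · rw [if_pos (Or.inr ⟨h.symm, ht⟩)]
      refine ((hasDerivAt_cq c W t).hasDerivWithinAt).congr_of_eventuallyEq ?_ ?_
      · filter_upwards [self_mem_nhdsWithin] with u (hu : t < u)
        have hle : k ≤ (u / W) ^ 2 := by
          rw [h]
          refine sq_le_sq' ?_ ?_
          · have h1 : (0:ℝ) ≤ t / W := by positivity
            have h2 : (0:ℝ) ≤ u / W := by
              have : (0:ℝ) < u := lt_trans ht hu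
              positivity
            linarith
          · gcongr
        simp +zetaDelta only [streamFn, max_eq_left hle]
      · simp +zetaDelta only [streamFn, max_eq_left h.le]
  · have hcond : ¬(k < (t / W) ^ 2 ∨ ((t / W) ^ 2 = k ∧ 0 < t)) := by
      rintro (hlt | ⟨he, _⟩)
      · exact absurd hlt (not_lt.mpr h.le)
      · exact absurd he h.ne
    rw [if_neg hcond]
    have hev : (fun u : ℝ => streamFn W H (u, x₂)) =ᶠ[nhds t] fun _ : ℝ => c * k := by
      have hopen : IsOpen {u : ℝ | (u / W) ^ 2 < k} := isOpen_lt (by fun_prop) continuous_const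
      filter_upwards [hopen.mem_nhds h] with u hu
      simp +zetaDelta only [streamFn, max_eq_right (le_of_lt hu)]
    exact ((hasDerivAt_const t (c * k)).congr_of_eventuallyEq hev).hasDerivWithinAt




lemma rect_open (W H : ℝ) : IsOpen (rectWH W H) := isOpen_Ioo.prod isOpen_Ioo

lemma streamFn_eq (W H : ℝ) (hWH : 0 ≤ min W H) : streamFn W H =
    fun p : ℝ × ℝ => max (min W H * (p.1 / W) ^ 2) (min W H * (p.2 / H) ^ 2) := by
  funext p
  exact mul_max_of_nonneg _ _ hWH

lemma abs_le_of_A {W : ℝ} (hW : 0 < W) {t : ℝ} (ht : t ∈ Ioo (-W / 2) (W / 2)) : |t| ≤ W / 2 := by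
  rw [abs_le]
  constructor <;> [linarith [ht.1]; linarith [ht.2]]

lemma norm_fst_clm_le : ‖ContinuousLinearMap.fst ℝ ℝ ℝ‖ ≤ 1 :=
  ContinuousLinearMap.opNorm_le_bound _ zero_le_one fun v => by
    simpa using norm_fst_le v

lemma norm_snd_clm_le : ‖ContinuousLinearMap.snd ℝ ℝ ℝ‖ ≤ 1 :=
  ContinuousLinearMap.opNorm_le_bound _ zero_le_one fun v => by
    simpa using norm_snd_le v

lemma streamFn_lip {W H : ℝ} (hW : 0 < W) (hH : 0 < H) :
    LipschitzOnWith 1 (streamFn W H) (rectWH W H) := by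
  have hc0 : 0 < min W H := lt_min hW hH
  rw [streamFn_eq W H hc0.le]
  have hconv : Convex ℝ (rectWH W H) := (convex_Ioo _ _).prod (convex_Ioo _ _)
  apply lipschitzOnWith_max'
  · refine Convex.lipschitzOnWith_of_nnnorm_fderiv_le
      (fun p _ => (hasFDerivAt_piece1 (min W H) W p).differentiableAt) (fun p hp => ?_) hconv
    rw [← NNReal.coe_le_coe, coe_nnnorm, NNReal.coe_one, (hasFDerivAt_piece1 (min W H) W p).fderiv]
    rw [norm_smul]
    have h1 : |p.1| ≤ W / 2 := abs_le_of_A hW hp.1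
    have h2 : min W H ≤ W := min_le_left _ _
    have habs : ‖2 * min W H * p.1 / W ^ 2‖ ≤ 1 := by
      rw [Real.norm_eq_abs, abs_div, abs_of_pos (pow_pos hW 2), div_le_one (pow_pos hW 2)]
      have : |2 * min W H * p.1| = 2 * min W H * |p.1| := by
        rw [abs_mul, abs_of_nonneg (by positivity)]
      rw [this]
      nlinarith [abs_nonneg p.1]
    calc ‖2 * min W H * p.1 / W ^ 2‖ * ‖ContinuousLinearMap.fst ℝ ℝ ℝ‖
        ≤ 1 * 1 := mul_le_mul habs norm_fst_clm_le (norm_nonneg _) zero_le_one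
      _ = 1 := one_mul 1
  · refine Convex.lipschitzOnWith_of_nnnorm_fderiv_le
      (fun p _ => (hasFDerivAt_piece2 (min W H) H p).differentiableAt) (fun p hp => ?_) hconv
    rw [← NNReal.coe_le_coe, coe_nnnorm, NNReal.coe_one, (hasFDerivAt_piece2 (min W H) H p).fderiv]
    rw [norm_smul]
    have h1 : |p.2| ≤ H / 2 := abs_le_of_A hH hp.2
    have h2 : min W H ≤ H := min_le_right _ _
    have habs : ‖2 * min W H * p.2 / H ^ 2‖ ≤ 1 := by
      rw [Real.norm_eq_abs, abs_div, abs_of_pos (pow_pos hH 2), div_le_one (pow_pos hH 2)]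
      have : |2 * min W H * p.2| = 2 * min W H * |p.2| := by
        rw [abs_mul, abs_of_nonneg (by positivity)]
      rw [this]
      nlinarith [abs_nonneg p.2]
    calc ‖2 * min W H * p.2 / H ^ 2‖ * ‖ContinuousLinearMap.snd ℝ ℝ ℝ‖
        ≤ 1 * 1 := mul_le_mul habs norm_snd_clm_le (norm_nonneg _) zero_le_one
      _ = 1 := one_mul 1

lemma streamFn_fderiv_norm_le {W H : ℝ} (hW : 0 < W) (hH : 0 < H) {x : ℝ × ℝ}
    (hx : x ∈ rectWH W H) : ‖fderiv ℝ (streamFn W H) x‖ ≤ 1 := by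
  simpa using norm_fderiv_le_of_lipschitzOn ℝ ((rect_open W H).mem_nhds hx) (streamFn_lip hW hH)

lemma streamFn_fderiv_apply_le {W H : ℝ} (hW : 0 < W) (hH : 0 < H) {x : ℝ × ℝ}
    (hx : x ∈ rectWH W H) (v : ℝ × ℝ) (hv : ‖v‖ ≤ 1) :
    |fderiv ℝ (streamFn W H) x v| ≤ 1 := by
  calc |fderiv ℝ (streamFn W H) x v| = ‖fderiv ℝ (streamFn W H) x v‖ := rfl
    _ ≤ ‖fderiv ℝ (streamFn W H) x‖ * ‖v‖ := (fderiv ℝ (streamFn W H) x).le_opNorm v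
    _ ≤ 1 * 1 := mul_le_mul (streamFn_fderiv_norm_le hW hH hx) hv (norm_nonneg _) zero_le_one
    _ = 1 := one_mul 1

example : ‖((0 : ℝ), (1 : ℝ))‖ = 1 := by simp [Prod.norm_def]
example : ‖((1 : ℝ), (0 : ℝ))‖ = 1 := by simp [Prod.norm_def]




lemma innerA {W H : ℝ} (hW : 0 < W) (hH : 0 < H) (φ : ℝ × ℝ → ℝ) (hφ : ContDiff ℝ (⊤ : ℕ∞) φ)
    (hsupp : HasCompactSupport φ) (hsub : tsupport φ ⊆ rectWH W H) (x₁ : ℝ) :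
    ∫ t in Ioo (-H / 2) (H / 2),
      (fderiv ℝ (streamFn W H) (x₁, t) (0, 1) * fderiv ℝ φ (x₁, t) (1, 0)
        + streamFn W H (x₁, t) * fderiv ℝ (fun q => fderiv ℝ φ q (1, 0)) (x₁, t) (0, 1)) = 0 := by
  have hc0 : (0:ℝ) < min W H := lt_min hW hH
  set c := min W H with hcdef
  set k := (x₁ / W) ^ 2 with hkdef
  have hk0 : 0 ≤ k := sq_nonneg _
  set φ₁ : ℝ × ℝ → ℝ := fun q => fderiv ℝ φ q (1, 0) with hφ₁def
  have hφ₁top : ContDiff ℝ (⊤ : ℕ∞) φ₁ := (hφ.fderiv_right (by simp)).clm_apply contDiff_const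
  have hφ₁cont : Continuous φ₁ := hφ₁top.continuous
  set A : ℝ × ℝ → ℝ := fun q => fderiv ℝ φ₁ q (0, 1) with hAdef
  have hAtop : ContDiff ℝ (⊤ : ℕ∞) A := (hφ₁top.fderiv_right (by simp)).clm_apply contDiff_const
  have hAcont : Continuous A := hAtop.continuous
  have hφ₁diff : Differentiable ℝ φ₁ := hφ₁top.differentiable (by simp)
  have hline_cont : Continuous fun t : ℝ => ((x₁, t) : ℝ × ℝ) := by fun_prop
  -- compact support bounds
  have hφ₁supp : HasCompactSupport φ₁ := hsupp.fderiv_apply ℝ (1, 0)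
  have hAsupp : HasCompactSupport A := hφ₁supp.fderiv_apply ℝ (0, 1)
  obtain ⟨C₁, hC₁⟩ := hφ₁supp.exists_bound_of_continuous hφ₁cont
  obtain ⟨C₂, hC₂⟩ := hAsupp.exists_bound_of_continuous hAcont
  have hC₁0 : 0 ≤ C₁ := le_trans (norm_nonneg _) (hC₁ 0)
  have hC₂0 : 0 ≤ C₂ := le_trans (norm_nonneg _) (hC₂ 0)
  -- slice derivative of φ₁
  have hφ₁line : ∀ t : ℝ, HasDerivAt (fun u : ℝ => φ₁ (x₁, u)) (A (x₁, t)) t := fun t =>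
    (hφ₁diff (x₁, t)).hasFDerivAt.comp_hasDerivAt t
      (HasDerivAt.prodMk (hasDerivAt_const t x₁) (hasDerivAt_id t))
  set a := -H / 2 with hadef
  set b := H / 2 with hbdef
  have hab : a ≤ b := by rw [hadef, hbdef]; linarith
  set uf : ℝ → ℝ := fun t => streamFn W H (x₁, t) * φ₁ (x₁, t) with hufdef
  set s' : ℝ → ℝ := fun t =>
    if k < (t / H) ^ 2 ∨ ((t / H) ^ 2 = k ∧ 0 < t) then 2 * c * t / H ^ 2 else 0 with hs'def
  set v' : ℝ → ℝ := fun t => s' t * φ₁ (x₁, t) + streamFn W H (x₁, t) * A (x₁, t) with hv'def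
  have hderiv : ∀ t ∈ Ioo a b, HasDerivWithinAt uf (v' t) (Ioi t) t := fun t _ =>
    (slice2_hasDerivWithinAt hW hH x₁ t).mul (hφ₁line t).hasDerivWithinAt
  have hucont : ContinuousOn uf (Icc a b) :=
    (((continuous_streamFn W H).comp hline_cont).mul (hφ₁cont.comp hline_cont)).continuousOn
  -- integrability of v'
  have hsqmeas : Measurable fun t : ℝ => (t / H) ^ 2 := by fun_prop
  have hs'meas : Measurable s' :=
    Measurable.ite ((measurableSet_lt measurable_const hsqmeas).union
      ((measurableSet_eq_fun hsqmeas measurable_const).inter measurableSet_Ioi))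
      (by fun_prop) measurable_const
  have hv'meas : Measurable v' :=
    (hs'meas.mul (hφ₁cont.comp hline_cont).measurable).add
      (((continuous_streamFn W H).comp hline_cont).measurable.mul
        (hAcont.comp hline_cont).measurable)
  have hbound : ∀ t ∈ Ioc a b, ‖v' t‖ ≤ (c / H) * C₁ + c * (k + 1) * C₂ := by
    intro t ht
    have htabs : |t| ≤ H / 2 := by
      rw [abs_le]; constructor
      · rw [hadef] at ht; linarith [ht.1]
      · rw [hbdef] at ht; linarith [ht.2]
    have hs'b : |s' t| ≤ c / H := by
      simp only [hs'def]
      by_cases hcond : k < (t / H) ^ 2 ∨ ((t / H) ^ 2 = k ∧ 0 < t)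
      · rw [if_pos hcond, abs_div, abs_of_pos (pow_pos hH 2), div_le_div_iff₀ (pow_pos hH 2) hH]
        have : |2 * c * t| = 2 * c * |t| := by
          rw [abs_mul, abs_of_nonneg (by positivity)]
        rw [this]
        nlinarith [mul_le_mul_of_nonneg_left htabs (by positivity : (0:ℝ) ≤ 2 * c * H)]
      · rw [if_neg hcond, abs_zero]
        positivity
    have hψb : |streamFn W H (x₁, t)| ≤ c * (k + 1) := by
      have hsq1 : (t / H) ^ 2 ≤ 1 := by
        rw [div_pow, div_le_one (pow_pos hH 2)]
        nlinarith [abs_nonneg t, sq_abs t]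
      have hmax : max k ((t / H) ^ 2) ≤ k + 1 := max_le (by linarith) (by linarith)
      have hmax0 : 0 ≤ max k ((t / H) ^ 2) := le_max_of_le_left hk0
      have hrfl : streamFn W H (x₁, t) = c * max k ((t / H) ^ 2) := rfl
      rw [hrfl, abs_mul, abs_of_nonneg hc0.le, abs_of_nonneg hmax0]
      exact mul_le_mul_of_nonneg_left hmax hc0.le
    calc ‖v' t‖ = |s' t * φ₁ (x₁, t) + streamFn W H (x₁, t) * A (x₁, t)| := rfl
      _ ≤ |s' t * φ₁ (x₁, t)| + |streamFn W H (x₁, t) * A (x₁, t)| := abs_add_le _ _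
      _ = |s' t| * |φ₁ (x₁, t)| + |streamFn W H (x₁, t)| * |A (x₁, t)| := by
          rw [abs_mul, abs_mul]
      _ ≤ (c / H) * C₁ + c * (k + 1) * C₂ := by
          have h1 := hC₁ (x₁, t)
          have h2 := hC₂ (x₁, t)
          rw [Real.norm_eq_abs] at h1 h2
          have := mul_le_mul hs'b h1 (abs_nonneg _) (by positivity)
          have := mul_le_mul hψb h2 (abs_nonneg _) (by positivity)
          linarith
  have hv'int : IntervalIntegrable v' volume a b := by
    rw [intervalIntegrable_iff_integrableOn_Ioc_of_le hab]
    refine Integrable.mono' (g := fun _ => (c / H) * C₁ + c * (k + 1) * C₂)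
      (integrableOn_const measure_Ioc_lt_top.ne) hv'meas.aestronglyMeasurable ?_
    exact (ae_restrict_iff' measurableSet_Ioc).2 (Filter.Eventually.of_forall hbound)
  -- boundary values vanish
  have hzero : ∀ t : ℝ, t ∉ Ioo (-H / 2) (H / 2) → φ₁ (x₁, t) = 0 := by
    intro t ht
    have h1 : (x₁, t) ∉ tsupport φ := fun hmem => ht (hsub hmem).2
    have h2 : (x₁, t) ∉ Function.support (fderiv ℝ φ) :=
      fun hs => h1 (support_fderiv_subset ℝ hs)
    rw [hφ₁def]
    simp only [Function.notMem_support.mp h2, ContinuousLinearMap.zero_apply]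
  have hFTC : ∫ t in a..b, v' t = uf b - uf a :=
    intervalIntegral.integral_eq_sub_of_hasDeriv_right_of_le hab hucont hderiv hv'int
  have hufb : uf b = 0 := by
    rw [hufdef]
    simp only [hzero b (fun hb' => lt_irrefl _ hb'.2), mul_zero]
  have hufa : uf a = 0 := by
    rw [hufdef]
    simp only [hzero a (fun ha' => lt_irrefl _ ha'.1), mul_zero]
  -- identify integrand a.e.
  set vt : ℝ → ℝ := fun t =>
    fderiv ℝ (streamFn W H) (x₁, t) (0, 1) * φ₁ (x₁, t) + streamFn W H (x₁, t) * A (x₁, t)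
    with hvtdef
  have hsubset : {t : ℝ | vt t ≠ v' t} ⊆ {H * Real.sqrt k, -(H * Real.sqrt k)} := by
    intro t ht
    by_contra hmem
    apply ht
    have hne : (t / H) ^ 2 ≠ k := by
      intro he
      have ht2 : t ^ 2 = k * H ^ 2 := by
        field_simp at he
        linarith [he]
      have habs : |t| = H * Real.sqrt k := by
        rw [← Real.sqrt_sq_eq_abs, ht2, Real.sqrt_mul hk0, Real.sqrt_sq hH.le]
        ring
      rcases abs_eq (by positivity : (0:ℝ) ≤ H * Real.sqrt k) |>.mp habs with h' | h'
      · exact hmem (Or.inl h')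
      · exact hmem (Or.inr h')
    have hkey : fderiv ℝ (streamFn W H) (x₁, t) (0, 1) = s' t := by
      rcases lt_or_gt_of_ne hne with hlt | hgt
      · -- (t/H)^2 < k
        have hcnd : ¬(k < (t / H) ^ 2 ∨ ((t / H) ^ 2 = k ∧ 0 < t)) := by
          rintro (h1 | ⟨h2, _⟩)
          · exact absurd h1 (not_lt.mpr hlt.le)
          · exact hne h2
        rw [fderiv_streamFn_of_lt1 (x := (x₁, t)) hlt]
        simp only [hs'def, if_neg hcnd]
        simp
      · rw [fderiv_streamFn_of_lt2 (x := (x₁, t)) hgt]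
        simp only [hs'def, if_pos (Or.inl hgt)]
        simp [hcdef]
    rw [hvtdef, hv'def]
    simp only [hkey]
  have hnull : volume {t : ℝ | vt t ≠ v' t} = 0 :=
    measure_mono_null hsubset (((Set.countable_singleton _).insert _).measure_zero volume)
  have hae : vt =ᵐ[volume] v' := by
    rw [Filter.EventuallyEq, ae_iff]
    exact hnull
  calc ∫ t in Ioo (-H / 2) (H / 2),
      (fderiv ℝ (streamFn W H) (x₁, t) (0, 1) * fderiv ℝ φ (x₁, t) (1, 0)
        + streamFn W H (x₁, t) * fderiv ℝ (fun q => fderiv ℝ φ q (1, 0)) (x₁, t) (0, 1))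
      = ∫ t in Ioo a b, vt t := rfl
    _ = ∫ t in Ioo a b, v' t := integral_congr_ae (ae_restrict_of_ae hae)
    _ = ∫ t in Ioc a b, v' t := integral_Ioc_eq_integral_Ioo.symm
    _ = ∫ t in a..b, v' t := (intervalIntegral.integral_of_le hab).symm
    _ = uf b - uf a := hFTC
    _ = 0 := by rw [hufb, hufa, sub_zero]




lemma innerB {W H : ℝ} (hW : 0 < W) (hH : 0 < H) (φ : ℝ × ℝ → ℝ) (hφ : ContDiff ℝ (⊤ : ℕ∞) φ)
    (hsupp : HasCompactSupport φ) (hsub : tsupport φ ⊆ rectWH W H) (x₂ : ℝ) :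
    ∫ t in Ioo (-W / 2) (W / 2),
      (fderiv ℝ (streamFn W H) (t, x₂) (1, 0) * fderiv ℝ φ (t, x₂) (0, 1)
        + streamFn W H (t, x₂) * fderiv ℝ (fun q => fderiv ℝ φ q (0, 1)) (t, x₂) (1, 0)) = 0 := by
  have hc0 : (0:ℝ) < min W H := lt_min hW hH
  set c := min W H with hcdef
  set k := (x₂ / H) ^ 2 with hkdef
  have hk0 : 0 ≤ k := sq_nonneg _
  set φ₂ : ℝ × ℝ → ℝ := fun q => fderiv ℝ φ q (0, 1) with hφ₂def
  have hφ₂top : ContDiff ℝ (⊤ : ℕ∞) φ₂ := (hφ.fderiv_right (by simp)).clm_apply contDiff_const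
  have hφ₂cont : Continuous φ₂ := hφ₂top.continuous
  set B : ℝ × ℝ → ℝ := fun q => fderiv ℝ φ₂ q (1, 0) with hBdef
  have hBtop : ContDiff ℝ (⊤ : ℕ∞) B := (hφ₂top.fderiv_right (by simp)).clm_apply contDiff_const
  have hBcont : Continuous B := hBtop.continuous
  have hφ₂diff : Differentiable ℝ φ₂ := hφ₂top.differentiable (by simp)
  have hline_cont : Continuous fun t : ℝ => ((t, x₂) : ℝ × ℝ) := by fun_prop
  have hφ₂supp : HasCompactSupport φ₂ := hsupp.fderiv_apply ℝ (0, 1)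
  have hBsupp : HasCompactSupport B := hφ₂supp.fderiv_apply ℝ (1, 0)
  obtain ⟨C₁, hC₁⟩ := hφ₂supp.exists_bound_of_continuous hφ₂cont
  obtain ⟨C₂, hC₂⟩ := hBsupp.exists_bound_of_continuous hBcont
  have hC₁0 : 0 ≤ C₁ := le_trans (norm_nonneg _) (hC₁ 0)
  have hC₂0 : 0 ≤ C₂ := le_trans (norm_nonneg _) (hC₂ 0)
  have hφ₂line : ∀ t : ℝ, HasDerivAt (fun u : ℝ => φ₂ (u, x₂)) (B (t, x₂)) t := fun t => by
    have h := (hφ₂diff (t, x₂)).hasFDerivAt.comp_hasDerivAt t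
      (HasDerivAt.prodMk (hasDerivAt_id' t) (hasDerivAt_const t x₂))
    exact h
  set a := -W / 2 with hadef
  set b := W / 2 with hbdef
  have hab : a ≤ b := by rw [hadef, hbdef]; linarith
  set uf : ℝ → ℝ := fun t => streamFn W H (t, x₂) * φ₂ (t, x₂) with hufdef
  set s' : ℝ → ℝ := fun t =>
    if k < (t / W) ^ 2 ∨ ((t / W) ^ 2 = k ∧ 0 < t) then 2 * c * t / W ^ 2 else 0 with hs'def
  set v' : ℝ → ℝ := fun t => s' t * φ₂ (t, x₂) + streamFn W H (t, x₂) * B (t, x₂) with hv'def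
  have hderiv : ∀ t ∈ Ioo a b, HasDerivWithinAt uf (v' t) (Ioi t) t := fun t _ =>
    (slice1_hasDerivWithinAt hW hH x₂ t).mul (hφ₂line t).hasDerivWithinAt
  have hucont : ContinuousOn uf (Icc a b) :=
    (((continuous_streamFn W H).comp hline_cont).mul (hφ₂cont.comp hline_cont)).continuousOn
  have hsqmeas : Measurable fun t : ℝ => (t / W) ^ 2 := by fun_prop
  have hs'meas : Measurable s' :=
    Measurable.ite ((measurableSet_lt measurable_const hsqmeas).union
      ((measurableSet_eq_fun hsqmeas measurable_const).inter measurableSet_Ioi))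
      (by fun_prop) measurable_const
  have hv'meas : Measurable v' :=
    (hs'meas.mul (hφ₂cont.comp hline_cont).measurable).add
      (((continuous_streamFn W H).comp hline_cont).measurable.mul
        (hBcont.comp hline_cont).measurable)
  have hbound : ∀ t ∈ Ioc a b, ‖v' t‖ ≤ (c / W) * C₁ + c * (k + 1) * C₂ := by
    intro t ht
    have htabs : |t| ≤ W / 2 := by
      rw [abs_le]; constructor
      · rw [hadef] at ht; linarith [ht.1]
      · rw [hbdef] at ht; linarith [ht.2]
    have hs'b : |s' t| ≤ c / W := by
      simp only [hs'def]
      by_cases hcond : k < (t / W) ^ 2 ∨ ((t / W) ^ 2 = k ∧ 0 < t)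
      · rw [if_pos hcond, abs_div, abs_of_pos (pow_pos hW 2), div_le_div_iff₀ (pow_pos hW 2) hW]
        have : |2 * c * t| = 2 * c * |t| := by
          rw [abs_mul, abs_of_nonneg (by positivity)]
        rw [this]
        nlinarith [mul_le_mul_of_nonneg_left htabs (by positivity : (0:ℝ) ≤ 2 * c * W)]
      · rw [if_neg hcond, abs_zero]
        positivity
    have hψb : |streamFn W H (t, x₂)| ≤ c * (k + 1) := by
      have hsq1 : (t / W) ^ 2 ≤ 1 := by
        rw [div_pow, div_le_one (pow_pos hW 2)]
        nlinarith [abs_nonneg t, sq_abs t]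
      have hmax : max ((t / W) ^ 2) k ≤ k + 1 := max_le (by linarith) (by linarith)
      have hmax0 : 0 ≤ max ((t / W) ^ 2) k := le_max_of_le_right hk0
      have hrfl : streamFn W H (t, x₂) = c * max ((t / W) ^ 2) k := rfl
      rw [hrfl, abs_mul, abs_of_nonneg hc0.le, abs_of_nonneg hmax0]
      exact mul_le_mul_of_nonneg_left hmax hc0.le
    calc ‖v' t‖ = |s' t * φ₂ (t, x₂) + streamFn W H (t, x₂) * B (t, x₂)| := rfl
      _ ≤ |s' t * φ₂ (t, x₂)| + |streamFn W H (t, x₂) * B (t, x₂)| := abs_add_le _ _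
      _ = |s' t| * |φ₂ (t, x₂)| + |streamFn W H (t, x₂)| * |B (t, x₂)| := by
          rw [abs_mul, abs_mul]
      _ ≤ (c / W) * C₁ + c * (k + 1) * C₂ := by
          have h1 := hC₁ (t, x₂)
          have h2 := hC₂ (t, x₂)
          rw [Real.norm_eq_abs] at h1 h2
          have := mul_le_mul hs'b h1 (abs_nonneg _) (by positivity)
          have := mul_le_mul hψb h2 (abs_nonneg _) (by positivity)
          linarith
  have hv'int : IntervalIntegrable v' volume a b := by
    rw [intervalIntegrable_iff_integrableOn_Ioc_of_le hab]
    refine Integrable.mono' (g := fun _ => (c / W) * C₁ + c * (k + 1) * C₂)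
      (integrableOn_const measure_Ioc_lt_top.ne) hv'meas.aestronglyMeasurable ?_
    exact (ae_restrict_iff' measurableSet_Ioc).2 (Filter.Eventually.of_forall hbound)
  have hzero : ∀ t : ℝ, t ∉ Ioo (-W / 2) (W / 2) → φ₂ (t, x₂) = 0 := by
    intro t ht
    have h1 : (t, x₂) ∉ tsupport φ := fun hmem => ht (hsub hmem).1
    have h2 : (t, x₂) ∉ Function.support (fderiv ℝ φ) :=
      fun hs => h1 (support_fderiv_subset ℝ hs)
    rw [hφ₂def]
    simp only [Function.notMem_support.mp h2, ContinuousLinearMap.zero_apply]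
  have hFTC : ∫ t in a..b, v' t = uf b - uf a :=
    intervalIntegral.integral_eq_sub_of_hasDeriv_right_of_le hab hucont hderiv hv'int
  have hufb : uf b = 0 := by
    rw [hufdef]
    simp only [hzero b (fun hb' => lt_irrefl _ hb'.2), mul_zero]
  have hufa : uf a = 0 := by
    rw [hufdef]
    simp only [hzero a (fun ha' => lt_irrefl _ ha'.1), mul_zero]
  set vt : ℝ → ℝ := fun t =>
    fderiv ℝ (streamFn W H) (t, x₂) (1, 0) * φ₂ (t, x₂) + streamFn W H (t, x₂) * B (t, x₂)
    with hvtdef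
  have hsubset : {t : ℝ | vt t ≠ v' t} ⊆ {W * Real.sqrt k, -(W * Real.sqrt k)} := by
    intro t ht
    by_contra hmem
    apply ht
    have hne : (t / W) ^ 2 ≠ k := by
      intro he
      have ht2 : t ^ 2 = k * W ^ 2 := by
        field_simp at he
        linarith [he]
      have habs : |t| = W * Real.sqrt k := by
        rw [← Real.sqrt_sq_eq_abs, ht2, Real.sqrt_mul hk0, Real.sqrt_sq hW.le]
        ring
      rcases abs_eq (by positivity : (0:ℝ) ≤ W * Real.sqrt k) |>.mp habs with h' | h'
      · exact hmem (Or.inl h')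
      · exact hmem (Or.inr h')
    have hkey : fderiv ℝ (streamFn W H) (t, x₂) (1, 0) = s' t := by
      rcases lt_or_gt_of_ne hne with hlt | hgt
      · have hcnd : ¬(k < (t / W) ^ 2 ∨ ((t / W) ^ 2 = k ∧ 0 < t)) := by
          rintro (h1 | ⟨h2, _⟩)
          · exact absurd h1 (not_lt.mpr hlt.le)
          · exact hne h2
        rw [fderiv_streamFn_of_lt2 (x := (t, x₂)) hlt]
        simp only [hs'def, if_neg hcnd]
        simp
      · rw [fderiv_streamFn_of_lt1 (x := (t, x₂)) hgt]
        simp only [hs'def, if_pos (Or.inl hgt)]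
        simp [hcdef]
    rw [hvtdef, hv'def]
    simp only [hkey]
  have hnull : volume {t : ℝ | vt t ≠ v' t} = 0 :=
    measure_mono_null hsubset (((Set.countable_singleton _).insert _).measure_zero volume)
  have hae : vt =ᵐ[volume] v' := by
    rw [Filter.EventuallyEq, ae_iff]
    exact hnull
  calc ∫ t in Ioo (-W / 2) (W / 2),
      (fderiv ℝ (streamFn W H) (t, x₂) (1, 0) * fderiv ℝ φ (t, x₂) (0, 1)
        + streamFn W H (t, x₂) * fderiv ℝ (fun q => fderiv ℝ φ q (0, 1)) (t, x₂) (1, 0))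
      = ∫ t in Ioo a b, vt t := rfl
    _ = ∫ t in Ioo a b, v' t := integral_congr_ae (ae_restrict_of_ae hae)
    _ = ∫ t in Ioc a b, v' t := integral_Ioc_eq_integral_Ioo.symm
    _ = ∫ t in a..b, v' t := (intervalIntegral.integral_of_le hab).symm
    _ = uf b - uf a := hFTC
    _ = 0 := by rw [hufb, hufa, sub_zero]




lemma schwarz_swap (φ : ℝ × ℝ → ℝ) (hφ : ContDiff ℝ (⊤ : ℕ∞) φ) (p v w : ℝ × ℝ) :
    fderiv ℝ (fun q => fderiv ℝ φ q v) p w = fderiv ℝ (fun q => fderiv ℝ φ q w) p v := by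
  have hd : Differentiable ℝ φ := hφ.differentiable (by simp)
  have hd' : Differentiable ℝ (fderiv ℝ φ) := (hφ.fderiv_right (m := (⊤ : ℕ∞)) (by simp)).differentiable (by simp)
  have h1 : fderiv ℝ (fun q => fderiv ℝ φ q v) p = (fderiv ℝ (fderiv ℝ φ) p).flip v := by
    rw [fderiv_clm_apply (hd' p) (differentiableAt_const v)]
    simp
  have h2 : fderiv ℝ (fun q => fderiv ℝ φ q w) p = (fderiv ℝ (fderiv ℝ φ) p).flip w := by
    rw [fderiv_clm_apply (hd' p) (differentiableAt_const w)]
    simp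
  rw [h1, h2]
  exact second_derivative_symmetric (fun y => (hd y).hasFDerivAt) ((hd' p).hasFDerivAt) w v

lemma rect_vol_lt_top {W H : ℝ} : volume (rectWH W H) < ⊤ := by
  have : volume (rectWH W H) = volume (Ioo (-W / 2) (W / 2)) * volume (Ioo (-H / 2) (H / 2)) := by
    rw [rectWH, Measure.volume_eq_prod, Measure.prod_prod]
  rw [this]
  exact ENNReal.mul_lt_top measure_Ioo_lt_top measure_Ioo_lt_top

lemma rect_measurable {W H : ℝ} : MeasurableSet (rectWH W H) :=
  measurableSet_Ioo.prod measurableSet_Ioo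

lemma streamFn_abs_le {W H : ℝ} (hW : 0 < W) (hH : 0 < H) {p : ℝ × ℝ} (hp : p ∈ rectWH W H) :
    |streamFn W H p| ≤ min W H := by
  have hc0 : (0:ℝ) < min W H := lt_min hW hH
  have h1 : (p.1 / W) ^ 2 ≤ 1 := by
    rw [div_pow, div_le_one (pow_pos hW 2)]
    have h1 : |p.1| ≤ W / 2 := by
      rw [abs_le]; exact ⟨by linarith [hp.1.1], by linarith [hp.1.2]⟩
    nlinarith [abs_nonneg p.1, sq_abs p.1]
  have h2 : (p.2 / H) ^ 2 ≤ 1 := by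
    rw [div_pow, div_le_one (pow_pos hH 2)]
    have h1 : |p.2| ≤ H / 2 := by
      rw [abs_le]; exact ⟨by linarith [hp.2.1], by linarith [hp.2.2]⟩
    nlinarith [abs_nonneg p.2, sq_abs p.2]
  have hmax0 : 0 ≤ max ((p.1 / W) ^ 2) ((p.2 / H) ^ 2) := le_max_of_le_left (sq_nonneg _)
  have hmax1 : max ((p.1 / W) ^ 2) ((p.2 / H) ^ 2) ≤ 1 := max_le h1 h2
  have : streamFn W H p = min W H * max ((p.1 / W) ^ 2) ((p.2 / H) ^ 2) := rfl
  rw [this, abs_mul, abs_of_nonneg hc0.le, abs_of_nonneg hmax0]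
  nlinarith

section GG
variable {W H : ℝ} (φ : ℝ × ℝ → ℝ)

lemma integrableGA (hW : 0 < W) (hH : 0 < H) (hφ : ContDiff ℝ (⊤ : ℕ∞) φ)
    (hsupp : HasCompactSupport φ) :
    IntegrableOn (fun p : ℝ × ℝ => fderiv ℝ (streamFn W H) p (0, 1) * fderiv ℝ φ p (1, 0)
      + streamFn W H p * fderiv ℝ (fun q => fderiv ℝ φ q (1, 0)) p (0, 1))
      (rectWH W H) volume := by
  set φ₁ : ℝ × ℝ → ℝ := fun q => fderiv ℝ φ q (1, 0) with hφ₁def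
  have hφ₁top : ContDiff ℝ (⊤ : ℕ∞) φ₁ := (hφ.fderiv_right (by simp)).clm_apply contDiff_const
  have hφ₁cont : Continuous φ₁ := hφ₁top.continuous
  set A : ℝ × ℝ → ℝ := fun q => fderiv ℝ φ₁ q (0, 1) with hAdef
  have hAtop : ContDiff ℝ (⊤ : ℕ∞) A := (hφ₁top.fderiv_right (by simp)).clm_apply contDiff_const
  have hAcont : Continuous A := hAtop.continuous
  have hφ₁supp : HasCompactSupport φ₁ := hsupp.fderiv_apply ℝ (1, 0)
  have hAsupp : HasCompactSupport A := hφ₁supp.fderiv_apply ℝ (0, 1)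
  obtain ⟨C₁, hC₁⟩ := hφ₁supp.exists_bound_of_continuous hφ₁cont
  obtain ⟨C₂, hC₂⟩ := hAsupp.exists_bound_of_continuous hAcont
  have hC₁0 : 0 ≤ C₁ := le_trans (norm_nonneg _) (hC₁ 0)
  have hC₂0 : 0 ≤ C₂ := le_trans (norm_nonneg _) (hC₂ 0)
  have hmeas : Measurable (fun p : ℝ × ℝ => fderiv ℝ (streamFn W H) p (0, 1) * φ₁ p
      + streamFn W H p * A p) :=
    ((measurable_fderiv_apply_const ℝ (streamFn W H) (0, 1)).mul hφ₁cont.measurable).add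
      ((continuous_streamFn W H).measurable.mul hAcont.measurable)
  refine Integrable.mono' (g := fun _ => 1 * C₁ + min W H * C₂)
    (integrableOn_const rect_vol_lt_top.ne) hmeas.aestronglyMeasurable ?_
  refine (ae_restrict_iff' rect_measurable).2 (Filter.Eventually.of_forall fun p hp => ?_)
  have hb1 : |fderiv ℝ (streamFn W H) p (0, 1)| ≤ 1 :=
    streamFn_fderiv_apply_le hW hH hp (0, 1) (by simp [Prod.norm_def])
  have hb2 : |streamFn W H p| ≤ min W H := streamFn_abs_le hW hH hp
  have h1 := hC₁ p
  have h2 := hC₂ p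
  rw [Real.norm_eq_abs] at h1 h2
  calc ‖fderiv ℝ (streamFn W H) p (0, 1) * φ₁ p + streamFn W H p * A p‖
      ≤ |fderiv ℝ (streamFn W H) p (0, 1) * φ₁ p| + |streamFn W H p * A p| := abs_add_le _ _
    _ = |fderiv ℝ (streamFn W H) p (0, 1)| * |φ₁ p| + |streamFn W H p| * |A p| := by
        rw [abs_mul, abs_mul]
    _ ≤ 1 * C₁ + min W H * C₂ := by
        have := mul_le_mul hb1 h1 (abs_nonneg _) zero_le_one
        have := mul_le_mul hb2 h2 (abs_nonneg _) (le_trans (abs_nonneg _) hb2)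
        linarith

lemma integrableGB (hW : 0 < W) (hH : 0 < H) (hφ : ContDiff ℝ (⊤ : ℕ∞) φ)
    (hsupp : HasCompactSupport φ) :
    IntegrableOn (fun p : ℝ × ℝ => fderiv ℝ (streamFn W H) p (1, 0) * fderiv ℝ φ p (0, 1)
      + streamFn W H p * fderiv ℝ (fun q => fderiv ℝ φ q (0, 1)) p (1, 0))
      (rectWH W H) volume := by
  set φ₂ : ℝ × ℝ → ℝ := fun q => fderiv ℝ φ q (0, 1) with hφ₂def
  have hφ₂top : ContDiff ℝ (⊤ : ℕ∞) φ₂ := (hφ.fderiv_right (by simp)).clm_apply contDiff_const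
  have hφ₂cont : Continuous φ₂ := hφ₂top.continuous
  set B : ℝ × ℝ → ℝ := fun q => fderiv ℝ φ₂ q (1, 0) with hBdef
  have hBtop : ContDiff ℝ (⊤ : ℕ∞) B := (hφ₂top.fderiv_right (by simp)).clm_apply contDiff_const
  have hBcont : Continuous B := hBtop.continuous
  have hφ₂supp : HasCompactSupport φ₂ := hsupp.fderiv_apply ℝ (0, 1)
  have hBsupp : HasCompactSupport B := hφ₂supp.fderiv_apply ℝ (1, 0)
  obtain ⟨C₁, hC₁⟩ := hφ₂supp.exists_bound_of_continuous hφ₂cont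
  obtain ⟨C₂, hC₂⟩ := hBsupp.exists_bound_of_continuous hBcont
  have hC₁0 : 0 ≤ C₁ := le_trans (norm_nonneg _) (hC₁ 0)
  have hC₂0 : 0 ≤ C₂ := le_trans (norm_nonneg _) (hC₂ 0)
  have hmeas : Measurable (fun p : ℝ × ℝ => fderiv ℝ (streamFn W H) p (1, 0) * φ₂ p
      + streamFn W H p * B p) :=
    ((measurable_fderiv_apply_const ℝ (streamFn W H) (1, 0)).mul hφ₂cont.measurable).add
      ((continuous_streamFn W H).measurable.mul hBcont.measurable)
  refine Integrable.mono' (g := fun _ => 1 * C₁ + min W H * C₂)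
    (integrableOn_const rect_vol_lt_top.ne) hmeas.aestronglyMeasurable ?_
  refine (ae_restrict_iff' rect_measurable).2 (Filter.Eventually.of_forall fun p hp => ?_)
  have hb1 : |fderiv ℝ (streamFn W H) p (1, 0)| ≤ 1 :=
    streamFn_fderiv_apply_le hW hH hp (1, 0) (by simp [Prod.norm_def])
  have hb2 : |streamFn W H p| ≤ min W H := streamFn_abs_le hW hH hp
  have h1 := hC₁ p
  have h2 := hC₂ p
  rw [Real.norm_eq_abs] at h1 h2
  calc ‖fderiv ℝ (streamFn W H) p (1, 0) * φ₂ p + streamFn W H p * B p‖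
      ≤ |fderiv ℝ (streamFn W H) p (1, 0) * φ₂ p| + |streamFn W H p * B p| := abs_add_le _ _
    _ = |fderiv ℝ (streamFn W H) p (1, 0)| * |φ₂ p| + |streamFn W H p| * |B p| := by
        rw [abs_mul, abs_mul]
    _ ≤ 1 * C₁ + min W H * C₂ := by
        have := mul_le_mul hb1 h1 (abs_nonneg _) zero_le_one
        have := mul_le_mul hb2 h2 (abs_nonneg _) (le_trans (abs_nonneg _) hb2)
        linarith

end GG

lemma intA {W H : ℝ} (hW : 0 < W) (hH : 0 < H) (φ : ℝ × ℝ → ℝ) (hφ : ContDiff ℝ (⊤ : ℕ∞) φ)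
    (hsupp : HasCompactSupport φ) (hsub : tsupport φ ⊆ rectWH W H) :
    ∫ p in rectWH W H, (fderiv ℝ (streamFn W H) p (0, 1) * fderiv ℝ φ p (1, 0)
      + streamFn W H p * fderiv ℝ (fun q => fderiv ℝ φ q (1, 0)) p (0, 1)) = 0 := by
  have hint := integrableGA φ hW hH hφ hsupp
  rw [rectWH] at hint ⊢
  rw [Measure.volume_eq_prod] at hint ⊢
  rw [setIntegral_prod _ hint]
  have : ∀ x₁ ∈ Ioo (-W / 2) (W / 2),
      (∫ t in Ioo (-H / 2) (H / 2),
        (fderiv ℝ (streamFn W H) (x₁, t) (0, 1) * fderiv ℝ φ (x₁, t) (1, 0)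
          + streamFn W H (x₁, t) * fderiv ℝ (fun q => fderiv ℝ φ q (1, 0)) (x₁, t) (0, 1))) = 0 :=
    fun x₁ _ => innerA hW hH φ hφ hsupp hsub x₁
  rw [setIntegral_congr_fun measurableSet_Ioo this]
  simp

lemma intB {W H : ℝ} (hW : 0 < W) (hH : 0 < H) (φ : ℝ × ℝ → ℝ) (hφ : ContDiff ℝ (⊤ : ℕ∞) φ)
    (hsupp : HasCompactSupport φ) (hsub : tsupport φ ⊆ rectWH W H) :
    ∫ p in rectWH W H, (fderiv ℝ (streamFn W H) p (1, 0) * fderiv ℝ φ p (0, 1)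
      + streamFn W H p * fderiv ℝ (fun q => fderiv ℝ φ q (0, 1)) p (1, 0)) = 0 := by
  have hint := integrableGB φ hW hH hφ hsupp
  rw [rectWH] at hint ⊢
  rw [Measure.volume_eq_prod] at hint ⊢
  rw [IntegrableOn, ← Measure.prod_restrict] at hint
  have hswap := integral_prod_symm _ hint
  rw [show ((volume : Measure ℝ).restrict (Ioo (-W / 2) (W / 2))).prod
        ((volume : Measure ℝ).restrict (Ioo (-H / 2) (H / 2)))
      = ((volume : Measure ℝ).prod volume).restrict
          (Ioo (-W / 2) (W / 2) ×ˢ Ioo (-H / 2) (H / 2)) from Measure.prod_restrict _ _] at hswap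
  rw [hswap]
  have : ∀ x₂ ∈ Ioo (-H / 2) (H / 2),
      (∫ t in Ioo (-W / 2) (W / 2),
        (fderiv ℝ (streamFn W H) (t, x₂) (1, 0) * fderiv ℝ φ (t, x₂) (0, 1)
          + streamFn W H (t, x₂) * fderiv ℝ (fun q => fderiv ℝ φ q (0, 1)) (t, x₂) (1, 0))) = 0 :=
    fun x₂ _ => innerB hW hH φ hφ hsupp hsub x₂
  rw [setIntegral_congr_fun measurableSet_Ioo this]
  simp


/-- The stream function `ψ` is 1-Lipschitz on the open rectangle,
its perpendicular gradient `∇^⊥ψ = (−∂₂ψ, ∂₁ψ)` is bounded by 1 in `L^∞`, and it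
is divergence-free in the distributional sense:
`∫ ∇^⊥ψ · ∇φ = 0` for all test functions `φ` supported in the rectangle. -/
theorem streamFn_lipschitz_divFree (W H : ℝ) (hW : 0 < W) (hH : 0 < H) :
    LipschitzOnWith 1 (streamFn W H) (rectWH W H) ∧
    (∀ x ∈ rectWH W H,
      |fderiv ℝ (streamFn W H) x (0, 1)| ≤ 1 ∧
      |fderiv ℝ (streamFn W H) x (1, 0)| ≤ 1) ∧
    (∀ φ : ℝ × ℝ → ℝ, ContDiff ℝ (⊤ : ℕ∞) φ → HasCompactSupport φ →
      tsupport φ ⊆ rectWH W H →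
      ∫ x in rectWH W H,
        (-(fderiv ℝ (streamFn W H) x (0, 1)) * fderiv ℝ φ x (1, 0) +
          (fderiv ℝ (streamFn W H) x (1, 0)) * fderiv ℝ φ x (0, 1)) = 0) := by
  refine ⟨streamFn_lip hW hH, ?_, ?_⟩
  · intro x hx
    exact ⟨streamFn_fderiv_apply_le hW hH hx (0, 1) (by simp [Prod.norm_def]),
           streamFn_fderiv_apply_le hW hH hx (1, 0) (by simp [Prod.norm_def])⟩
  · intro φ hφ hsupp hsub
    have hkey : ∀ p : ℝ × ℝ,
        -(fderiv ℝ (streamFn W H) p (0, 1)) * fderiv ℝ φ p (1, 0)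
          + (fderiv ℝ (streamFn W H) p (1, 0)) * fderiv ℝ φ p (0, 1)
        = -((fderiv ℝ (streamFn W H) p (0, 1)) * fderiv ℝ φ p (1, 0)
            + streamFn W H p * fderiv ℝ (fun q => fderiv ℝ φ q (1, 0)) p (0, 1))
          + ((fderiv ℝ (streamFn W H) p (1, 0)) * fderiv ℝ φ p (0, 1)
            + streamFn W H p * fderiv ℝ (fun q => fderiv ℝ φ q (0, 1)) p (1, 0)) := by
      intro p
      rw [schwarz_swap φ hφ p (1, 0) (0, 1)]
      ring
    rw [setIntegral_congr_fun rect_measurable (fun p _ => hkey p)]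
    have hGA := integrableGA φ hW hH hφ hsupp
    have hGB := integrableGB φ hW hH hφ hsupp
    have hGA' : IntegrableOn (fun p : ℝ × ℝ =>
        -((fderiv ℝ (streamFn W H) p (0, 1)) * fderiv ℝ φ p (1, 0)
          + streamFn W H p * fderiv ℝ (fun q => fderiv ℝ φ q (1, 0)) p (0, 1)))
        (rectWH W H) volume := hGA.neg
    calc ∫ x in rectWH W H,
        (-((fderiv ℝ (streamFn W H) x (0, 1)) * fderiv ℝ φ x (1, 0)
            + streamFn W H x * fderiv ℝ (fun q => fderiv ℝ φ q (1, 0)) x (0, 1))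
          + ((fderiv ℝ (streamFn W H) x (1, 0)) * fderiv ℝ φ x (0, 1)
            + streamFn W H x * fderiv ℝ (fun q => fderiv ℝ φ q (0, 1)) x (1, 0)))
        = (∫ x in rectWH W H,
            -((fderiv ℝ (streamFn W H) x (0, 1)) * fderiv ℝ φ x (1, 0)
              + streamFn W H x * fderiv ℝ (fun q => fderiv ℝ φ q (1, 0)) x (0, 1)))
          + ∫ x in rectWH W H,
            ((fderiv ℝ (streamFn W H) x (1, 0)) * fderiv ℝ φ x (0, 1)
              + streamFn W H x * fderiv ℝ (fun q => fderiv ℝ φ q (0, 1)) x (1, 0)) :=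
          integral_add hGA' hGB
      _ = -(∫ x in rectWH W H,
            ((fderiv ℝ (streamFn W H) x (0, 1)) * fderiv ℝ φ x (1, 0)
              + streamFn W H x * fderiv ℝ (fun q => fderiv ℝ φ q (1, 0)) x (0, 1)))
          + ∫ x in rectWH W H,
            ((fderiv ℝ (streamFn W H) x (1, 0)) * fderiv ℝ φ x (0, 1)
              + streamFn W H x * fderiv ℝ (fun q => fderiv ℝ φ q (0, 1)) x (1, 0)) := by
          rw [integral_neg]
      _ = 0 := by
          rw [intA hW hH φ hφ hsupp hsub, intB hW hH φ hφ hsupp hsub]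
          simp

end
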